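/- arXiv:2206.15439 — 2 statements merged into one kernel-verified Lean document; each statement's English description precedes it below -/
import Mathlib

section
/- For the friendship graph F_n with n ≥ 2 (n triangles sharing a common vertex), the outer-connected domination number of the middle graph satisfies γ̃_c(M(F_n)) = n + 1. -/
open SimpleGraph

/-- `S` is a dominating set of `H`: every vertex is in `S` or adjacent to a vertex of `S`. -/
def IsDomSet {V : Type*} (H : SimpleGraph V) (S : Set V) : Prop :=
  ∀ v : V, ∃ u ∈ S, u = v ∨ H.Adj u v

/-- The connected domination number: minimum size of a dominating set inducing a
connected subgraph. -/
noncomputable def connDomNum {V : Type*} (H : SimpleGraph V) : ℕ :=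
  sInf {k | ∃ S : Set V, IsDomSet H S ∧ (H.induce S).Connected ∧ S.ncard = k}

/-- The outer-connected domination number: minimum size of a dominating set whose
complement induces a connected subgraph. -/
noncomputable def outConnDomNum {V : Type*} (H : SimpleGraph V) : ℕ :=
  sInf {k | ∃ S : Set V, IsDomSet H S ∧ (H.induce Sᶜ).Connected ∧ S.ncard = k}

/-- The middle graph `M(G)`: vertices are `V(G) ∪ E(G)`; a vertex is adjacent to its
incident edges, and two edges are adjacent iff they share a vertex. -/
def middleGraph {V : Type*} (G : SimpleGraph V) : SimpleGraph (V ⊕ G.edgeSet) where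
  Adj x y :=
    match x, y with
    | Sum.inl _, Sum.inl _ => False
    | Sum.inl v, Sum.inr e => v ∈ (e : Sym2 V)
    | Sum.inr e, Sum.inl v => v ∈ (e : Sym2 V)
    | Sum.inr e, Sum.inr f => e ≠ f ∧ ∃ v, v ∈ (e : Sym2 V) ∧ v ∈ (f : Sym2 V)
  symm := by
    constructor
    rintro (v | e) (w | f) h
    · exact h.elim
    · exact h
    · exact h
    · exact ⟨Ne.symm h.1, h.2.imp fun v hv => ⟨hv.2, hv.1⟩⟩
  loopless := by
    constructor
    rintro (v | e) h
    · exact h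
    · exact h.1 rfl

/-- The edge cover number `ρ(G)`: minimum number of edges covering all vertices. -/
noncomputable def edgeCoverNum {V : Type*} (G : SimpleGraph V) : ℕ :=
  sInf {k | ∃ C : Set (Sym2 V), C ⊆ G.edgeSet ∧ (∀ v : V, ∃ e ∈ C, v ∈ e) ∧ C.ncard = k}

/-- The wheel graph with hub `none` and a cycle on `ZMod n` (so `n + 1` vertices). -/
def wheelGraph (n : ℕ) : SimpleGraph (Option (ZMod n)) where
  Adj x y :=
    match x, y with
    | none, none => False
    | none, some _ => True
    | some _, none => True
    | some i, some j => i ≠ j ∧ (i - j = 1 ∨ j - i = 1)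
  symm := by
    constructor
    rintro (_ | i) (_ | j) h
    · exact h.elim
    · trivial
    · trivial
    · exact ⟨h.1.symm, h.2.symm⟩
  loopless := by
    constructor
    rintro (_ | i) h
    · exact h
    · exact h.1 rfl

/-- The friendship graph `F n`: `n` triangles sharing the common vertex `none`. -/
def friendshipGraph (n : ℕ) : SimpleGraph (Option (Fin n × Fin 2)) where
  Adj x y :=
    match x, y with
    | none, none => False
    | none, some _ => True
    | some _, none => True
    | some (i, a), some (j, b) => i = j ∧ a ≠ b
  symm := by
    constructor
    rintro (_ | ⟨i, a⟩) (_ | ⟨j, b⟩) h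
    · exact h.elim
    · trivial
    · trivial
    · exact ⟨h.1.symm, h.2.symm⟩
  loopless := by
    constructor
    rintro (_ | ⟨i, a⟩) h
    · exact h
    · exact h.2 rfl

/-- The corona `G ∘ K₁`: each vertex `Sum.inl v` of `G` gets a pendant vertex `Sum.inr v`. -/
def corona {V : Type*} (G : SimpleGraph V) : SimpleGraph (V ⊕ V) where
  Adj x y :=
    match x, y with
    | Sum.inl v, Sum.inl w => G.Adj v w
    | Sum.inl v, Sum.inr w => v = w
    | Sum.inr v, Sum.inl w => v = w
    | Sum.inr _, Sum.inr _ => False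
  symm := by
    constructor
    rintro (v | v) (w | w) h
    · exact G.adj_symm h
    · exact h.symm
    · exact h.symm
    · exact h.elim
  loopless := by
    constructor
    rintro (v | v) h
    · exact G.irrefl h
    · exact h

/-- The 2-corona `G ∘ P₂`: each vertex `Sum.inl v` of `G` gets a pendant path
`Sum.inl v — Sum.inr (Sum.inl v) — Sum.inr (Sum.inr v)`. -/
def corona2 {V : Type*} (G : SimpleGraph V) : SimpleGraph (V ⊕ (V ⊕ V)) where
  Adj x y :=
    match x, y with
    | Sum.inl v, Sum.inl w => G.Adj v w
    | Sum.inl v, Sum.inr (Sum.inl w) => v = w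
    | Sum.inr (Sum.inl v), Sum.inl w => v = w
    | Sum.inr (Sum.inl v), Sum.inr (Sum.inr w) => v = w
    | Sum.inr (Sum.inr v), Sum.inr (Sum.inl w) => v = w
    | _, _ => False
  symm := by
    constructor
    rintro (v | v | v) (w | w | w) h
    · exact G.adj_symm h
    · exact h.symm
    · exact h.elim
    · exact h.symm
    · exact h.elim
    · exact h.symm
    · exact h.elim
    · exact h.symm
    · exact h.elim
  loopless := by
    constructor
    rintro (v | v | v) h
    · exact G.irrefl h
    · exact h
    · exact h

/-- The join `G + K̄ p` of `G` with the empty graph on `p` vertices. -/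
def joinEmpty {V : Type*} (G : SimpleGraph V) (p : ℕ) : SimpleGraph (V ⊕ Fin p) where
  Adj x y :=
    match x, y with
    | Sum.inl v, Sum.inl w => G.Adj v w
    | Sum.inl _, Sum.inr _ => True
    | Sum.inr _, Sum.inl _ => True
    | Sum.inr _, Sum.inr _ => False
  symm := by
    constructor
    rintro (v | v) (w | w) h
    · exact G.adj_symm h
    · trivial
    · trivial
    · exact h.elim
  loopless := by
    constructor
    rintro (v | v) h
    · exact G.irrefl h
    · exact h

/-!
An element of `M(G)` dominates at most two vertices of `G`: a vertex only itself, since `V(G)`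
is independent in `M(G)`, and an edge its two ends. So a dominating set of `M(F_n)` has at least
`⌈(2n + 1) / 2⌉ = n + 1` elements. The hub together with the `n` rim edges attains this bound, and
what remains, the `2n` spokes and `2n` outer vertices, is connected: the spokes all meet at the
hub, so they form a clique of `M(F_n)`, and each outer vertex is adjacent to its spoke.
-/

lemma outConnDomNum_eq_of_forall_le {V : Type*} {H : SimpleGraph V} {S : Set V}
    (hS : IsDomSet H S) (hconn : (H.induce Sᶜ).Connected)
    (hmin : ∀ T, IsDomSet H T → S.ncard ≤ T.ncard) :
    outConnDomNum H = S.ncard :=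
  IsLeast.csInf_eq ⟨⟨S, hS, hconn, rfl⟩, by rintro _ ⟨T, hT, -, rfl⟩; exact hmin T hT⟩

namespace middleGraph

variable {V : Type*} {G : SimpleGraph V}

def dominatedVertices (x : V ⊕ G.edgeSet) : Set V :=
  {v | x = Sum.inl v ∨ (middleGraph G).Adj x (Sum.inl v)}

lemma ncard_dominatedVertices_le_two (x : V ⊕ G.edgeSet) : (dominatedVertices x).ncard ≤ 2 := by
  rcases x with w | ⟨e, he⟩
  · have : dominatedVertices (G := G) (Sum.inl w) = {w} := by
      ext v; simp [dominatedVertices, middleGraph, eq_comm]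
    rw [this, Set.ncard_singleton]; omega
  · induction e using Sym2.ind with
    | _ a b =>
      have : dominatedVertices (Sum.inr ⟨s(a, b), he⟩) = {a, b} := by
        ext v; simp [dominatedVertices, middleGraph]
      rw [this]
      exact (Set.ncard_insert_le a {b}).trans (by rw [Set.ncard_singleton])

theorem _root_.IsDomSet.card_le_two_mul_ncard_of_middleGraph [Finite V]
    {S : Set (V ⊕ G.edgeSet)} (hS : IsDomSet (middleGraph G) S) :
    Nat.card V ≤ 2 * S.ncard := by
  have hfin : S.Finite := S.toFinite
  have hcover : (Set.univ : Set V) = ⋃ x ∈ hfin.toFinset, dominatedVertices x := by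
    refine (Set.eq_univ_of_forall fun v => ?_).symm
    obtain ⟨x, hx, hxv⟩ := hS (Sum.inl v)
    exact Set.mem_biUnion (hfin.mem_toFinset.2 hx) hxv
  calc Nat.card V = (⋃ x ∈ hfin.toFinset, dominatedVertices x).ncard := by
        rw [← hcover, Set.ncard_univ]
    _ ≤ ∑ x ∈ hfin.toFinset, (dominatedVertices x).ncard := Finset.set_ncard_biUnion_le _ _
    _ ≤ ∑ _x ∈ hfin.toFinset, 2 :=
        Finset.sum_le_sum fun x _ => ncard_dominatedVertices_le_two x
    _ = 2 * S.ncard := by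
        rw [Finset.sum_const, smul_eq_mul, mul_comm, Set.ncard_eq_toFinset_card S hfin]

end middleGraph

namespace friendshipGraph

variable {n : ℕ}

def spoke (i : Fin n) (a : Fin 2) : (friendshipGraph n).edgeSet :=
  ⟨s(none, some (i, a)), trivial⟩

def rim (i : Fin n) : (friendshipGraph n).edgeSet :=
  ⟨s(some (i, 0), some (i, 1)), rfl, by decide⟩

lemma rim_injective : Function.Injective (rim (n := n)) := by
  intro i j h
  simpa [rim, Sym2.eq_iff] using congrArg Subtype.val h

lemma edge_eq_spoke_or_rim (e : (friendshipGraph n).edgeSet) :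
    (∃ i a, e = spoke i a) ∨ ∃ i, e = rim i := by
  obtain ⟨e, he⟩ := e
  induction e using Sym2.ind with
  | _ x y =>
    match x, y, he with
    | none, some (i, a), _ => exact Or.inl ⟨i, a, rfl⟩
    | some (i, a), none, _ => exact Or.inl ⟨i, a, Subtype.ext Sym2.eq_swap⟩
    | some (i, a), some (j, b), he =>
      obtain ⟨rfl, hab⟩ := he
      refine Or.inr ⟨i, Subtype.ext ?_⟩
      fin_cases a <;> fin_cases b <;> first | exact absurd rfl hab | rfl | exact Sym2.eq_swap

def hubAndRims (n : ℕ) : Set (Option (Fin n × Fin 2) ⊕ (friendshipGraph n).edgeSet) :=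
  insert (Sum.inl none) (Set.range fun i => Sum.inr (rim i))

lemma ncard_hubAndRims : (hubAndRims n).ncard = n + 1 := by
  rw [hubAndRims, Set.ncard_insert_of_notMem (by simp),
    Set.ncard_range_of_injective fun i j h => rim_injective (Sum.inr_injective h), Nat.card_fin]

lemma isDomSet_hubAndRims : IsDomSet (middleGraph (friendshipGraph n)) (hubAndRims n) := by
  rintro ((_ | ⟨i, a⟩) | e)
  · exact ⟨Sum.inl none, Or.inl rfl, Or.inl rfl⟩
  · refine ⟨Sum.inr (rim i), Or.inr ⟨i, rfl⟩, Or.inr ?_⟩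
    fin_cases a <;> simp [middleGraph, rim]
  · rcases edge_eq_spoke_or_rim e with ⟨i, a, rfl⟩ | ⟨i, rfl⟩
    · exact ⟨Sum.inl none, Or.inl rfl, Or.inr (Sym2.mem_mk_left _ _)⟩
    · exact ⟨Sum.inr (rim i), Or.inr ⟨i, rfl⟩, Or.inl rfl⟩

lemma inr_spoke_notMem_hubAndRims (i : Fin n) (a : Fin 2) :
    Sum.inr (spoke i a) ∉ hubAndRims n := by
  simp [hubAndRims, spoke, rim, Subtype.ext_iff]

lemma connected_induce_compl_hubAndRims (hn : 0 < n) :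
    ((middleGraph (friendshipGraph n)).induce (hubAndRims n)ᶜ).Connected := by
  let spokeVert (i : Fin n) (a : Fin 2) : ↥(hubAndRims n)ᶜ :=
    ⟨Sum.inr (spoke i a), inr_spoke_notMem_hubAndRims i a⟩
  let base := spokeVert ⟨0, hn⟩ 0
  have reach_spoke (i : Fin n) (a : Fin 2) :
      ((middleGraph (friendshipGraph n)).induce (hubAndRims n)ᶜ).Reachable base
        (spokeVert i a) := by
    by_cases h : spoke ⟨0, hn⟩ 0 = spoke i a
    · rw [show base = spokeVert i a from Subtype.ext (congrArg Sum.inr h)]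
    · exact Adj.reachable ⟨h, none, Sym2.mem_mk_left _ _, Sym2.mem_mk_left _ _⟩
  refine (connected_iff_exists_forall_reachable _).2 ⟨base, ?_⟩
  rintro ⟨(_ | ⟨i, a⟩) | e, hx⟩
  · exact absurd (Set.mem_insert _ _) hx
  · exact (reach_spoke i a).trans (Adj.reachable (Sym2.mem_mk_right _ _))
  · rcases edge_eq_spoke_or_rim e with ⟨i, a, rfl⟩ | ⟨i, rfl⟩
    · exact reach_spoke i a
    · exact absurd (Or.inr ⟨i, rfl⟩) hx

end friendshipGraph

theorem stmt10 (n : ℕ) (h2 : 2 ≤ n) :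
    outConnDomNum (middleGraph (friendshipGraph n)) = n + 1 := by
  refine (outConnDomNum_eq_of_forall_le friendshipGraph.isDomSet_hubAndRims
    (friendshipGraph.connected_induce_compl_hubAndRims (by omega)) fun T hT => ?_).trans
    friendshipGraph.ncard_hubAndRims
  have hcard := hT.card_le_two_mul_ncard_of_middleGraph
  rw [Finite.card_option, Nat.card_prod, Nat.card_fin, Nat.card_fin] at hcard
  rw [friendshipGraph.ncard_hubAndRims]
  omega
end

section
/- For any connected graph G of order n ≥ 2 and any integer p < n, the outer-connected domination number of the middle graph of the join satisfies ⌈(n+p)/2⌉ ≤ γ̃_c(M(G + K̄_p)) ≤ n. -/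
open SimpleGraph

/-!
A vertex of `H` outside a dominating set `S` of `M(H)` lies on an edge in `S`, and an edge
has only two ends, so `|V(H)| ≤ 2 |S|`; for `H = G + K̄_p` this is `n + p ≤ 2 |S|`.
For the upper bound inject the vertices of `K̄_p` into `V(G)` by `f` and take the spokes
`f q — q` together with the vertices of `G` outside the image of `f`: these `n` elements
dominate `M(G + K̄_p)`, and their complement is connected because `G + K̄_p` minus the spokes
is still connected and every vertex left in the complement lies on one of its edges.
-/

theorem Set.ncard_preimage_inl_add_ncard_preimage_inr {α β : Type*} [Finite α] [Finite β]
    (s : Set (α ⊕ β)) : (Sum.inl ⁻¹' s).ncard + (Sum.inr ⁻¹' s).ncard = s.ncard := by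
  conv_rhs => rw [← Set.image_preimage_inl_union_image_preimage_inr s]
  rw [Set.ncard_union_eq Set.disjoint_image_inl_image_inr,
    Set.ncard_image_of_injective _ Sum.inl_injective,
    Set.ncard_image_of_injective _ Sum.inr_injective]

theorem Sym2.ncard_setOf_mem_le_two {α : Type*} (z : Sym2 α) : {x | x ∈ z}.ncard ≤ 2 := by
  classical
  have hz : {x | x ∈ z} = (z.toFinset : Set α) := by ext; simp [Sym2.mem_toFinset]
  rw [hz, Set.ncard_coe_finset, Sym2.card_toFinset]
  split_ifs <;> simp

theorem outConnDomNum_le {W : Type*} {H : SimpleGraph W} {S : Set W} (hS : IsDomSet H S)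
    (hconn : (H.induce Sᶜ).Connected) : outConnDomNum H ≤ S.ncard :=
  Nat.sInf_le ⟨S, hS, hconn, rfl⟩

section MiddleGraph

variable {W : Type*} {H : SimpleGraph W}

def middleSet (H : SimpleGraph W) (A : Set W) (D : Set (Sym2 W)) : Set (W ⊕ H.edgeSet) :=
  {z | Sum.elim (· ∈ A) (fun e => (e : Sym2 W) ∈ D) z}

theorem ncard_middleSet [Finite W] {A : Set W} {D : Set (Sym2 W)} (hD : D ⊆ H.edgeSet) :
    (middleSet H A D).ncard = A.ncard + D.ncard := by
  have hinl : Sum.inl ⁻¹' middleSet H A D = A := rfl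
  have hinr : Sum.inr ⁻¹' middleSet H A D = Subtype.val ⁻¹' D := rfl
  rw [← Set.ncard_preimage_inl_add_ncard_preimage_inr, hinl, hinr,
    Set.ncard_preimage_of_injective_subset_range Subtype.val_injective]
  rwa [Subtype.range_coe]

theorem IsDomSet.card_le_two_mul_ncard_of_middleGraph_s14 [Finite W] {S : Set (W ⊕ H.edgeSet)}
    (hS : IsDomSet (middleGraph H) S) : Nat.card W ≤ 2 * S.ncard := by
  have hS_card := Set.ncard_preimage_inl_add_ncard_preimage_inr S
  set A := Sum.inl ⁻¹' S
  set B := Sum.inr ⁻¹' S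
  have hcover : Aᶜ ⊆ ⋃ e : B, {x | x ∈ (e : Sym2 W)} := by
    intro x hx
    obtain ⟨y | e, hu, heq | hadj⟩ := hS (Sum.inl x)
    · exact absurd (Sum.inl_injective heq ▸ hu) hx
    · exact hadj.elim
    · exact Sum.inr_ne_inl heq |>.elim
    · exact Set.mem_iUnion.2 ⟨⟨e, hu⟩, hadj⟩
  have : Fintype B := Fintype.ofFinite B
  have hAc : Aᶜ.ncard ≤ 2 * B.ncard := calc
    Aᶜ.ncard ≤ (⋃ e : B, {x | x ∈ (e : Sym2 W)}).ncard := Set.ncard_le_ncard hcover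
    _ ≤ ∑ e : B, {x | x ∈ (e : Sym2 W)}.ncard := Set.ncard_iUnion_le_of_fintype _
    _ ≤ ∑ _e : B, 2 := Finset.sum_le_sum fun e _ => Sym2.ncard_setOf_mem_le_two _
    _ = 2 * B.ncard := by
      rw [Finset.sum_const, Finset.card_univ, smul_eq_mul, mul_comm, ← Nat.card_eq_fintype_card,
        Nat.card_coe_set_eq]
  have := Set.ncard_add_ncard_compl A
  omega

theorem div_two_le_outConnDomNum_middleGraph [Finite W]
    (h : ∃ S, IsDomSet (middleGraph H) S ∧ ((middleGraph H).induce Sᶜ).Connected) :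
    (Nat.card W + 1) / 2 ≤ outConnDomNum (middleGraph H) := by
  obtain ⟨S, hS, hconn⟩ := h
  refine le_csInf ⟨_, S, hS, hconn, rfl⟩ ?_
  rintro k ⟨T, hT, -, rfl⟩
  have := hT.card_le_two_mul_ncard_of_middleGraph_s14
  omega

theorem isDomSet_middleGraph_middleSet {A : Set W} {D : Set (Sym2 W)}
    (hcover : ∀ x, x ∈ A ∨ ∃ e : H.edgeSet, (e : Sym2 W) ∈ D ∧ x ∈ (e : Sym2 W)) :
    IsDomSet (middleGraph H) (middleSet H A D) := by
  rintro (x | e)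
  · rcases hcover x with hx | ⟨e, he, hxe⟩
    · exact ⟨Sum.inl x, hx, Or.inl rfl⟩
    · exact ⟨Sum.inr e, he, Or.inr hxe⟩
  · obtain ⟨x, hx⟩ : ∃ x, x ∈ (e : Sym2 W) := ⟨_, Sym2.out_fst_mem _⟩
    rcases hcover x with hxA | ⟨e', he', hxe'⟩
    · exact ⟨Sum.inl x, hxA, Or.inr hx⟩
    · refine ⟨Sum.inr e', he', ?_⟩
      by_cases h : e' = e
      · exact Or.inl (congrArg _ h)
      · exact Or.inr ⟨h, x, hxe', hx⟩

theorem reachable_induce_middleGraph_of_mem_of_mem {T : Set (W ⊕ H.edgeSet)} {e e' : H.edgeSet}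
    (he : Sum.inr e ∈ T) (he' : Sum.inr e' ∈ T) {x : W} (hx : x ∈ (e : Sym2 W))
    (hx' : x ∈ (e' : Sym2 W)) :
    ((middleGraph H).induce T).Reachable ⟨_, he⟩ ⟨_, he'⟩ := by
  by_cases h : e = e'
  · subst h; rfl
  · exact SimpleGraph.Adj.reachable
      (show (middleGraph H).Adj (Sum.inr e) (Sum.inr e') from ⟨h, x, hx, hx'⟩)

theorem SimpleGraph.Walk.reachable_induce_middleGraph {D : Set (Sym2 W)} {a b : W}
    (w : (H.deleteEdges D).Walk a b) {T : Set (W ⊕ H.edgeSet)}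
    (hT : ∀ e : H.edgeSet, (e : Sym2 W) ∉ D → Sum.inr e ∈ T) {e e' : H.edgeSet}
    (he : Sum.inr e ∈ T) (he' : Sum.inr e' ∈ T) (ha : a ∈ (e : Sym2 W))
    (hb : b ∈ (e' : Sym2 W)) :
    ((middleGraph H).induce T).Reachable ⟨_, he⟩ ⟨_, he'⟩ := by
  induction w generalizing e with
  | nil => exact reachable_induce_middleGraph_of_mem_of_mem he he' ha hb
  | cons hadj w ih =>
    obtain ⟨hH, hD⟩ := deleteEdges_adj.1 hadj
    let f : H.edgeSet := ⟨s(_, _), hH⟩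
    have hf : Sum.inr f ∈ T := hT f hD
    exact (reachable_induce_middleGraph_of_mem_of_mem he hf ha (Sym2.mem_mk_left _ _)).trans
      (ih hf (Sym2.mem_mk_right _ _) hb)

theorem connected_induce_middleGraph_compl_middleSet [Nontrivial W] (A : Set W)
    {D : Set (Sym2 W)} (hK : (H.deleteEdges D).Connected) :
    ((middleGraph H).induce (middleSet H A D)ᶜ).Connected := by
  set T := (middleSet H A D)ᶜ
  have hT : ∀ e : H.edgeSet, (e : Sym2 W) ∉ D → Sum.inr e ∈ T := fun _ h => h
  have hedge : ∀ x, ∃ e : H.edgeSet, ∃ he : Sum.inr e ∈ T, x ∈ (e : Sym2 W) := by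
    intro x
    obtain ⟨y, hxy⟩ := hK.preconnected.exists_adj_of_nontrivial x
    obtain ⟨hH, hD⟩ := deleteEdges_adj.1 hxy
    exact ⟨⟨s(_, _), hH⟩, hT _ hD, Sym2.mem_mk_left _ _⟩
  have hreach : ∀ (e e' : H.edgeSet) (he : Sum.inr e ∈ T) (he' : Sum.inr e' ∈ T),
      ((middleGraph H).induce T).Reachable ⟨_, he⟩ ⟨_, he'⟩ := by
    intro e e' he he'
    obtain ⟨w⟩ := hK.preconnected (e : Sym2 W).out.1 (e' : Sym2 W).out.1
    exact w.reachable_induce_middleGraph hT he he' (Sym2.out_fst_mem _) (Sym2.out_fst_mem _)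
  obtain ⟨e₀, he₀, -⟩ := hedge (Classical.arbitrary W)
  refine (connected_iff_exists_forall_reachable _).2 ⟨⟨_, he₀⟩, ?_⟩
  rintro ⟨x | e, hz⟩
  · obtain ⟨e, he, hxe⟩ := hedge x
    exact (hreach e₀ e he₀ he).trans
      (SimpleGraph.Adj.reachable (show (middleGraph H).Adj (Sum.inr e) (Sum.inl x) from hxe))
  · exact hreach e₀ e he₀ hz

end MiddleGraph

section JoinEmpty

variable {V : Type*} {G : SimpleGraph V} {p : ℕ}

def joinEmptySpokes (f : Fin p → V) : Set (Sym2 (V ⊕ Fin p)) :=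
  Set.range fun q => s(Sum.inl (f q), Sum.inr q)

theorem ncard_joinEmptySpokes (f : Fin p → V) : (joinEmptySpokes f).ncard = p := by
  rw [joinEmptySpokes, Set.ncard_range_of_injective, Nat.card_eq_fintype_card, Fintype.card_fin]
  intro q q' h
  exact (by simpa using h : f q = f q' ∧ q = q').2

theorem connected_joinEmpty_deleteEdges_joinEmptySpokes [Nontrivial V] (hc : G.Connected)
    (f : Fin p → V) : ((joinEmpty G p).deleteEdges (joinEmptySpokes f)).Connected := by
  set K := (joinEmpty G p).deleteEdges (joinEmptySpokes f)
  let ι : G →g K := ⟨Sum.inl, fun h => deleteEdges_adj.2 ⟨h, by simp [joinEmptySpokes]⟩⟩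
  obtain ⟨v₀⟩ := hc.nonempty
  refine (connected_iff_exists_forall_reachable _).2 ⟨Sum.inl v₀, ?_⟩
  rintro (v | q)
  · exact (hc.preconnected v₀ v).map ι
  · obtain ⟨v, hv⟩ := exists_ne (f q)
    have hadj : K.Adj (Sum.inl v) (Sum.inr q) :=
      deleteEdges_adj.2 ⟨trivial, by simpa [joinEmptySpokes] using hv.symm⟩
    exact ((hc.preconnected v₀ v).map ι).trans hadj.reachable

theorem joinEmptySpokes_covers (f : Fin p → V) (x : V ⊕ Fin p) :
    x ∈ Sum.inl '' (Set.range f)ᶜ ∨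
      ∃ e : (joinEmpty G p).edgeSet, (e : Sym2 _) ∈ joinEmptySpokes f ∧ x ∈ (e : Sym2 _) := by
  rcases x with v | q
  · by_cases hv : v ∈ Set.range f
    · obtain ⟨q, rfl⟩ := hv
      exact Or.inr ⟨⟨s(Sum.inl (f q), Sum.inr q), trivial⟩, ⟨q, rfl⟩, Sym2.mem_mk_left _ _⟩
    · exact Or.inl ⟨v, hv, rfl⟩
  · exact Or.inr ⟨⟨s(Sum.inl (f q), Sum.inr q), trivial⟩, ⟨q, rfl⟩, Sym2.mem_mk_right _ _⟩

theorem ncard_middleSet_joinEmptySpokes [Finite V] {f : Fin p → V} (hf : f.Injective) :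
    (middleSet (joinEmpty G p) (Sum.inl '' (Set.range f)ᶜ) (joinEmptySpokes f)).ncard =
      Nat.card V := by
  have hrange := Set.ncard_add_ncard_compl (Set.range f)
  rw [Set.ncard_range_of_injective hf, Nat.card_eq_fintype_card, Fintype.card_fin] at hrange
  rw [ncard_middleSet, Set.ncard_image_of_injective _ Sum.inl_injective, ncard_joinEmptySpokes]
  · omega
  · rintro _ ⟨q, rfl⟩
    trivial

end JoinEmpty

theorem stmt14 {V : Type*} [Fintype V] (G : SimpleGraph V) (n p : ℕ)
    (hn : Fintype.card V = n) (h2 : 2 ≤ n) (hc : G.Connected) (hp : p < n) :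
    (n + p + 1) / 2 ≤ outConnDomNum (middleGraph (joinEmpty G p)) ∧
      outConnDomNum (middleGraph (joinEmpty G p)) ≤ n := by
  subst hn
  have : Nontrivial V := Fintype.one_lt_card_iff_nontrivial.1 h2
  have : Nontrivial (V ⊕ Fin p) := Sum.inl_injective.nontrivial
  obtain ⟨f⟩ : Nonempty (Fin p ↪ V) :=
    Function.Embedding.nonempty_of_card_le (by simpa using hp.le)
  have hdom := isDomSet_middleGraph_middleSet (joinEmptySpokes_covers (G := G) f)
  have hconn := connected_induce_middleGraph_compl_middleSet (Sum.inl '' (Set.range f)ᶜ)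
    (connected_joinEmpty_deleteEdges_joinEmptySpokes hc f)
  constructor
  · simpa [Nat.card_sum] using div_two_le_outConnDomNum_middleGraph ⟨_, hdom, hconn⟩
  · simpa [ncard_middleSet_joinEmptySpokes f.injective] using outConnDomNum_le hdom hconn
end
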